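/- Let i ≥ 2 be an integer. Then ᾱ({1, 3, 2i}) = i/(2i+3). -/

import Mathlib

/-!
Among `i + 1` elements of an independent set, consecutive gaps are `2` or at least `4`, since
the distances `1` and `3` are forbidden. If the elements lie in `2i + 3` consecutive integers,
the gaps add up to at most `2i + 2`, which forces two of the elements to be at the forbidden
distance `2i`. Hence every block of `2i + 3` consecutive integers contains at most `i` elements,
and the density is at most `i / (2i + 3)`. The residues `0, 2, …, 2i - 2` modulo `2i + 3` form
an independent set attaining this bound.
-/

open Filter

/-- The upper density of a set of integers. -/
noncomputable def density (A : Set ℤ) : ℝ :=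
  Filter.limsup
    (fun N : ℕ => ((A ∩ Set.Icc (-(N : ℤ)) (N : ℤ)).ncard : ℝ) / (2 * (N : ℝ) + 1))
    Filter.atTop

/-- A set of integers is independent in the distance graph `G(S)` if no two distinct
elements differ by an element of `S`. -/
def IsIndepSet (S : Finset ℕ) (A : Set ℤ) : Prop :=
  ∀ a ∈ A, ∀ b ∈ A, a ≠ b → (a - b).natAbs ∉ S

/-- The independence ratio of the distance graph `G(S)`. -/
noncomputable def indRatio (S : Finset ℕ) : ℝ :=
  sSup (density '' {A : Set ℤ | IsIndepSet S A})

open Topology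

section Density

variable {A : Set ℤ}

lemma tendsto_div_two_mul_add_one (C : ℝ) :
    Tendsto (fun N : ℕ => C / (2 * (N : ℝ) + 1)) atTop (𝓝 0) :=
  tendsto_const_nhds.div_atTop <| tendsto_atTop_add_const_right _ 1 <|
    tendsto_natCast_atTop_atTop.const_mul_atTop two_pos

lemma density_le_of_ncard_le {c C : ℝ}
    (h : ∀ N : ℕ, ((A ∩ Set.Icc (-(N : ℤ)) N).ncard : ℝ) ≤ c * (2 * N + 1) + C) :
    density A ≤ c := by
  have hlim : Tendsto (fun N : ℕ => c + C / (2 * (N : ℝ) + 1)) atTop (𝓝 c) := by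
    simpa using (tendsto_div_two_mul_add_one C).const_add c
  refine (limsup_le_limsup (Eventually.of_forall fun N => ?_) ?_ hlim.isBoundedUnder_le).trans_eq
    hlim.limsup_eq
  · have hN : (0 : ℝ) < 2 * N + 1 := by positivity
    rw [div_le_iff₀ hN, add_mul, div_mul_cancel₀ _ hN.ne']
    exact h N
  · exact isCoboundedUnder_le_of_le atTop (x := 0) fun N => by positivity

lemma density_eq_of_abs_ncard_sub_le {c C : ℝ}
    (h : ∀ N : ℕ, |((A ∩ Set.Icc (-(N : ℤ)) N).ncard : ℝ) - c * (2 * N + 1)| ≤ C) :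
    density A = c := by
  refine Tendsto.limsup_eq (tendsto_iff_norm_sub_tendsto_zero.2 ?_)
  refine squeeze_zero (fun _ => norm_nonneg _) (fun N => ?_) (tendsto_div_two_mul_add_one C)
  have hN : (0 : ℝ) < 2 * N + 1 := by positivity
  rw [Real.norm_eq_abs, div_sub' hN.ne', abs_div, abs_of_pos hN, mul_comm]
  exact div_le_div_of_nonneg_right (h N) hN.le

end Density

section Windows

variable {A : Set ℤ} {p k : ℕ}

lemma ncard_inter_Icc_le_of_forall_ncard_inter_Ico_le (hp : 0 < p)
    (h : ∀ m : ℤ, (A ∩ Set.Ico (m * p) (m * p + p)).ncard ≤ k) (N : ℕ) :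
    p * (A ∩ Set.Icc (-(N : ℤ)) N).ncard ≤ k * (2 * N + 2 * p) := by
  have hp' : (0 : ℤ) < p := by exact_mod_cast hp
  set I := Finset.Icc ((-N : ℤ) / p) ((N : ℤ) / p)
  have hcover : A ∩ Set.Icc (-(N : ℤ)) N ⊆ ⋃ m ∈ I, A ∩ Set.Ico (m * p) (m * p + p) := by
    rintro n ⟨hnA, hn⟩
    refine Set.mem_iUnion₂.2 ⟨n / p, ?_, hnA, (Int.ediv_eq_iff_of_pos hp').1 rfl⟩
    exact Finset.mem_Icc.2 ⟨Int.ediv_le_ediv hp' hn.1, Int.ediv_le_ediv hp' hn.2⟩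
  have hcard : (p : ℤ) * I.card ≤ 2 * N + 2 * p := by
    rw [Int.card_Icc]
    have := Int.mul_ediv_self_le (x := (N : ℤ)) hp'.ne'
    have := Int.lt_mul_ediv_self_add (x := -(N : ℤ)) hp'
    have := Int.ediv_le_ediv hp' (show -(N : ℤ) ≤ N by omega)
    rw [Int.toNat_of_nonneg (by omega)]
    nlinarith
  have hfin : (⋃ m ∈ I, A ∩ Set.Ico (m * p) (m * p + p)).Finite :=
    I.finite_toSet.biUnion fun _ _ => (Set.finite_Ico _ _).inter_of_right A
  calc p * (A ∩ Set.Icc (-(N : ℤ)) N).ncard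
      ≤ p * ∑ m ∈ I, (A ∩ Set.Ico (m * p) (m * p + p)).ncard :=
        Nat.mul_le_mul_left _ ((Set.ncard_le_ncard hcover hfin).trans (I.set_ncard_biUnion_le _))
    _ ≤ p * (I.card * k) := Nat.mul_le_mul_left _ (Finset.sum_le_card_nsmul _ _ _ fun m _ => h m)
    _ ≤ k * (2 * N + 2 * p) := by zify; nlinarith

lemma le_ncard_inter_Icc_of_forall_le_ncard_inter_Ico (hp : 0 < p)
    (h : ∀ m : ℤ, k ≤ (A ∩ Set.Ico (m * p) (m * p + p)).ncard) (N : ℕ) :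
    k * (2 * N + 2) ≤ p * (A ∩ Set.Icc (-(N : ℤ)) N).ncard + 2 * p * k := by
  have hp' : (0 : ℤ) < p := by exact_mod_cast hp
  set q := (N : ℤ) / p
  set I := Finset.Ico (-q) q
  have hq : 0 ≤ q := Int.ediv_nonneg (by positivity) hp'.le
  have hqN := Int.mul_ediv_self_le (x := (N : ℤ)) hp'.ne'
  have hNq := Int.lt_mul_ediv_self_add (x := (N : ℤ)) hp'
  have hsub : ⋃ m ∈ I, A ∩ Set.Ico (m * p) (m * p + p) ⊆ A ∩ Set.Icc (-(N : ℤ)) N := by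
    simp only [Set.iUnion_subset_iff, Finset.mem_Ico, I]
    rintro m ⟨hm1, hm2⟩ n ⟨hnA, hn1, hn2⟩
    refine ⟨hnA, by nlinarith, by nlinarith⟩
  have hdisj : (I : Set ℤ).PairwiseDisjoint fun m => A ∩ Set.Ico (m * p) (m * p + p) := by
    intro m _ m' _ hmm'
    refine Set.disjoint_left.2 fun n hn hn' => hmm' ?_
    rw [← (Int.ediv_eq_iff_of_pos hp').2 hn.2, ← (Int.ediv_eq_iff_of_pos hp').2 hn'.2]
  have hunion : (⋃ m ∈ I, A ∩ Set.Ico (m * p) (m * p + p)).ncard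
      = ∑ m ∈ I, (A ∩ Set.Ico (m * p) (m * p + p)).ncard := by
    rw [← finsum_mem_coe_finset]
    exact I.finite_toSet.ncard_biUnion (fun _ _ => (Set.finite_Ico _ _).inter_of_right A) hdisj
  have hcard : (I.card : ℤ) = 2 * q := by rw [Int.card_Ico, Int.toNat_of_nonneg (by omega)]; ring
  calc k * (2 * N + 2) ≤ p * (I.card * k) + 2 * p * k := by zify; rw [hcard]; nlinarith
    _ ≤ p * ∑ m ∈ I, (A ∩ Set.Ico (m * p) (m * p + p)).ncard + 2 * p * k := by
        gcongr; exact Finset.card_nsmul_le_sum _ _ _ fun m _ => h m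
    _ ≤ p * (A ∩ Set.Icc (-(N : ℤ)) N).ncard + 2 * p * k := by
        gcongr
        rw [← hunion]
        exact Set.ncard_le_ncard hsub ((Set.finite_Icc _ _).inter_of_right A)

end Windows

section WindowDensity

variable {A : Set ℤ} {p k : ℕ}

lemma density_le_of_forall_ncard_inter_Ico_le (hp : 0 < p)
    (h : ∀ m : ℤ, (A ∩ Set.Ico (m * p) (m * p + p)).ncard ≤ k) : density A ≤ k / p := by
  refine density_le_of_ncard_le (C := 2 * k) fun N => ?_
  have hp' : (0 : ℝ) < p := by exact_mod_cast hp
  have hN := ncard_inter_Icc_le_of_forall_ncard_inter_Ico_le hp h N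
  rw [div_mul_eq_mul_div, div_add' _ _ _ hp'.ne', le_div_iff₀ hp']
  rify at hN
  nlinarith

lemma density_eq_of_forall_ncard_inter_Ico_eq (hp : 0 < p)
    (h : ∀ m : ℤ, (A ∩ Set.Ico (m * p) (m * p + p)).ncard = k) : density A = k / p := by
  refine density_eq_of_abs_ncard_sub_le (C := 2 * k) fun N => ?_
  have hp' : (0 : ℝ) < p := by exact_mod_cast hp
  have hle := ncard_inter_Icc_le_of_forall_ncard_inter_Ico_le hp (fun m => (h m).le) N
  have hge := le_ncard_inter_Icc_of_forall_le_ncard_inter_Ico hp (fun m => (h m).ge) N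
  rify at hle hge
  rw [div_mul_eq_mul_div, sub_div' hp'.ne', abs_div, abs_of_pos hp', div_le_iff₀ hp', abs_le]
  constructor <;> nlinarith

end WindowDensity

section Gaps

variable {a : ℕ → ℤ} {n : ℕ}

lemma sub_eq_two_mul_or_two_mul_add_two_le
    (ha : ∀ j < n, a (j + 1) - a j = 2 ∨ 4 ≤ a (j + 1) - a j) {l k : ℕ} (hk : l + k ≤ n) :
    a (l + k) - a l = 2 * k ∨ 2 * k + 2 ≤ a (l + k) - a l := by
  induction k with
  | zero => simp
  | succ k ih =>
    have hstep := ha (l + k) (by omega)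
    rw [← add_assoc]
    push_cast
    rcases ih (by omega) with h | h <;> omega

lemma exists_sub_eq_two_mul (hn : 2 ≤ n)
    (ha : ∀ j < n, a (j + 1) - a j = 2 ∨ 4 ≤ a (j + 1) - a j) (hspan : a n - a 0 ≤ 2 * n + 2) :
    ∃ l m, l < m ∧ m ≤ n ∧ a m - a l = 2 * n := by
  -- `a n - a 0` is `2n` or `2n + 2`; in the latter case a single gap is `4`, and dropping
  -- the first or the last gap (one of which is `2`) leaves `2n`.
  obtain ⟨n, rfl⟩ : ∃ k, n = k + 2 := ⟨n - 2, by omega⟩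
  have hfirst : a 1 - a 0 = 2 ∨ 4 ≤ a 1 - a 0 := ha 0 (by omega)
  have hlast : a (n + 2) - a (n + 1) = 2 ∨ 4 ≤ a (n + 2) - a (n + 1) := ha (n + 1) (by omega)
  have h0 := sub_eq_two_mul_or_two_mul_add_two_le ha (l := 0) (k := n + 2) (by omega)
  have h1 := sub_eq_two_mul_or_two_mul_add_two_le ha (l := 1) (k := n + 1) (by omega)
  have h1' := sub_eq_two_mul_or_two_mul_add_two_le ha (l := 1) (k := n) (by omega)
  rw [zero_add] at h0
  rw [show 1 + (n + 1) = n + 2 by omega] at h1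
  rw [add_comm] at h1'
  push_cast at *
  rcases h0 with h0 | h0
  · exact ⟨0, n + 2, by omega, le_rfl, by omega⟩
  rcases h1 with h1 | h1
  · exact ⟨0, n + 1, by omega, by omega, by omega⟩
  · exact ⟨1, n + 2, by omega, le_rfl, by omega⟩

end Gaps

lemma IsIndepSet.sub_ne {S : Finset ℕ} {A : Set ℤ} (hA : IsIndepSet S A) {a b : ℤ} (ha : a ∈ A)
    (hb : b ∈ A) {d : ℕ} (hd : d ∈ S) (hd0 : 0 < d) : a - b ≠ d := by
  intro hab
  refine hA a ha b hb (by omega) ?_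
  rwa [hab, Int.natAbs_natCast]

lemma IsIndepSet.ncard_inter_Ico_le {S : Finset ℕ} {A : Set ℤ} (hA : IsIndepSet S A) {i : ℕ}
    (hi : 2 ≤ i) (h1 : 1 ∈ S) (h3 : 3 ∈ S) (h2i : 2 * i ∈ S) (x : ℤ) :
    (A ∩ Set.Ico x (x + (2 * i + 3 : ℕ))).ncard ≤ i := by
  by_contra! hcard
  have hfin : (A ∩ Set.Ico x (x + (2 * i + 3 : ℕ))).Finite :=
    (Set.finite_Ico _ _).inter_of_right A
  obtain ⟨t, hts, ht⟩ := Finset.exists_subset_card_eq (s := hfin.toFinset) (n := i + 1)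
    (by rw [← Set.ncard_eq_toFinset_card _ hfin]; omega)
  set a : ℕ → ℤ := fun j => t.orderEmbOfFin ht (Fin.clamp j i)
  have hmem : ∀ j, a j ∈ A ∩ Set.Ico x (x + (2 * i + 3 : ℕ)) := fun j =>
    hfin.mem_toFinset.1 (hts (t.orderEmbOfFin_mem ht _))
  have hlt : ∀ l m, l < m → m ≤ i → a l < a m := fun l m hlm hmi =>
    (t.orderEmbOfFin ht).strictMono (Fin.mk_lt_mk.2 (by omega))
  have hgap : ∀ j < i, a (j + 1) - a j = 2 ∨ 4 ≤ a (j + 1) - a j := fun j hj => by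
    have hpos := hlt j (j + 1) (by omega) (by omega)
    have hne1 := hA.sub_ne (hmem (j + 1)).1 (hmem j).1 h1 one_pos
    have hne3 := hA.sub_ne (hmem (j + 1)).1 (hmem j).1 h3 three_pos
    push_cast at hne1 hne3
    omega
  have hspan : a i - a 0 ≤ 2 * i + 2 := by
    obtain ⟨-, hlow, -⟩ := hmem 0
    obtain ⟨-, -, hupp⟩ := hmem i
    push_cast at hupp
    omega
  obtain ⟨l, m, hlm, hmi, hd⟩ := exists_sub_eq_two_mul hi hgap hspan
  exact hA.sub_ne (hmem m).1 (hmem l).1 h2i (by omega) (by push_cast; exact hd)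

lemma setOf_emod_mem_inter_Ico {p : ℤ} (hp : 0 < p) {R : Set ℤ} (hR : R ⊆ Set.Ico 0 p) (m : ℤ) :
    {n | n % p ∈ R} ∩ Set.Ico (m * p) (m * p + p) = (m * p + ·) '' R := by
  ext n
  simp only [Set.mem_inter_iff, Set.mem_ofPred_eq, Set.mem_image]
  constructor
  · rintro ⟨hn, hmn⟩
    refine ⟨n % p, hn, ?_⟩
    rw [← (Int.ediv_eq_iff_of_pos hp).2 hmn]
    linarith [Int.emod_add_ediv_mul n p]
  · rintro ⟨r, hr, rfl⟩
    obtain ⟨hr0, hrp⟩ := hR hr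
    refine ⟨?_, by omega, by omega⟩
    rwa [add_comm, Int.add_mul_emod_self_right, Int.emod_eq_of_lt hr0 hrp]

lemma density_setOf_emod_mem {p : ℕ} (hp : 0 < p) {R : Set ℤ} (hR : R ⊆ Set.Ico 0 p) :
    density {n | n % p ∈ R} = R.ncard / p := by
  refine density_eq_of_forall_ncard_inter_Ico_eq hp fun m => ?_
  rw [setOf_emod_mem_inter_Ico (by exact_mod_cast hp) hR,
    Set.ncard_image_of_injective _ (add_right_injective _)]

def evenResidueSet (i : ℕ) : Set ℤ :=
  {n | n % (2 * i + 3 : ℕ) ∈ (fun k : ℕ => 2 * (k : ℤ)) '' Set.Iio i}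

lemma density_evenResidueSet (i : ℕ) :
    density (evenResidueSet i) = (i : ℝ) / (2 * (i : ℝ) + 3) := by
  have hR : (fun k : ℕ => 2 * (k : ℤ)) '' Set.Iio i ⊆ Set.Ico 0 (2 * i + 3 : ℕ) := by
    rintro _ ⟨k, hk, rfl⟩
    simp only [Set.mem_Iio] at hk
    constructor <;> push_cast <;> omega
  rw [evenResidueSet, density_setOf_emod_mem (by omega) hR,
    Set.ncard_image_of_injective _ fun k l hkl => by simpa using hkl, Set.ncard_Iio_nat]
  norm_cast

lemma isIndepSet_evenResidueSet (i : ℕ) : IsIndepSet {1, 3, 2 * i} (evenResidueSet i) := by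
  rintro a ⟨k, hk, hak⟩ b ⟨l, hl, hbl⟩ hne hS
  simp only [Set.mem_Iio] at hk hl
  simp only [Finset.mem_insert, Finset.mem_singleton] at hS
  push_cast at hak hbl
  set p : ℤ := 2 * i + 3
  set c := a / p - b / p
  have hdiff : a - b = p * c + (2 * k - 2 * l) := by
    linarith [Int.mul_ediv_add_emod a p, Int.mul_ediv_add_emod b p]
  have hS' : -p ≤ a - b ∧ a - b ≤ p := by omega
  have hc : -2 < c ∧ c < 2 := by
    constructor <;> by_contra! hc <;> nlinarith
  obtain hc | hc | hc : c = -1 ∨ c = 0 ∨ c = 1 := by omega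
  all_goals rw [hc] at hdiff; omega

lemma IsIndepSet.density_le {S : Finset ℕ} {A : Set ℤ} (hA : IsIndepSet S A) {i : ℕ}
    (hi : 2 ≤ i) (h1 : 1 ∈ S) (h3 : 3 ∈ S) (h2i : 2 * i ∈ S) :
    density A ≤ (i : ℝ) / (2 * (i : ℝ) + 3) := by
  have := density_le_of_forall_ncard_inter_Ico_le (p := 2 * i + 3) (by omega) fun m =>
    hA.ncard_inter_Ico_le hi h1 h3 h2i (m * (2 * i + 3 : ℕ))
  exact_mod_cast this

/-- For `i ≥ 2`, `ᾱ({1, 3, 2i}) = i/(2i+3)`. -/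
theorem indRatio_one_three_even (i : ℕ) (hi : 2 ≤ i) :
    indRatio ({1, 3, 2 * i} : Finset ℕ) = (i : ℝ) / (2 * (i : ℝ) + 3) := by
  refine IsGreatest.csSup_eq
    ⟨⟨evenResidueSet i, isIndepSet_evenResidueSet i, density_evenResidueSet i⟩, ?_⟩
  rintro _ ⟨A, hA, rfl⟩
  exact hA.density_le hi (by simp) (by simp) (by simp)
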